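/- Let a ∈ ℝ with |a| ≤ 1/2 and b > 0 with a² + b² ≥ 1, and let Γ = ℤ(1,0) + ℤ(a,b). Then: (i) there exists a smooth φ : ℝ² → ℂ², not identically zero, with φ(p + γ) = φ(p) for all γ ∈ Γ, satisfying (∂ₓ − i∂_y)φ₂ = (2π/b) φ₁ and −(∂ₓ + i∂_y)φ₁ = (2π/b) φ₂; (ii) for every λ with 0 < λ < 2π/b there is no such nonzero Γ-periodic smooth solution of (∂ₓ − i∂_y)φ₂ = λφ₁, −(∂ₓ + i∂_y)φ₁ = λφ₂. (The first positive Dirac eigenvalue of the flat torus with trivial spin structure is λ₁(𝕋², g_{a,b}, S₀) = 2π/b.) -/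

import Mathlib

/-- Partial derivative in the first coordinate direction of a map on `ℝ × ℝ`. -/
noncomputable def dX (f : ℝ × ℝ → ℂ) (p : ℝ × ℝ) : ℂ := fderiv ℝ f p (1, 0)

/-- Partial derivative in the second coordinate direction of a map on `ℝ × ℝ`. -/
noncomputable def dY (f : ℝ × ℝ → ℂ) (p : ℝ × ℝ) : ℂ := fderiv ℝ f p (0, 1)

open Complex MeasureTheory intervalIntegral Metric

noncomputable section

namespace DFT

lemma hasDerivAt_cexp (c : ℂ) (y : ℝ) :
    HasDerivAt (fun t : ℝ => Complex.exp (c * t)) (c * Complex.exp (c * y)) y := by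
  have h1 : HasDerivAt (fun t : ℝ => ((t : ℂ))) 1 y := by
    exact Complex.ofRealCLM.hasDerivAt (x := y)
  have h2 : HasDerivAt (fun t : ℝ => c * (t : ℂ)) c y := by
    simpa using h1.const_mul c
  simpa [mul_comm] using h2.cexp

lemma ode_const {u : ℝ → ℂ} (hu : ∀ y, HasDerivAt u 0 y) (y : ℝ) : u y = u 0 :=
  is_const_of_deriv_eq_zero (fun t => (hu t).differentiableAt)
    (fun t => (hu t).deriv) y 0

lemma ode_exp {u : ℝ → ℂ} {c : ℂ} (hu : ∀ y, HasDerivAt u (c * u y) y) (y : ℝ) :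
    u y = u 0 * Complex.exp (c * y) := by
  have hg : ∀ t : ℝ, HasDerivAt (fun t : ℝ => u t * Complex.exp (-c * t)) 0 t := by
    intro t
    have h := (hu t).mul (hasDerivAt_cexp (-c) t)
    refine h.congr_deriv ?_
    ring
  have hconst := ode_const hg y
  simp only [Complex.ofReal_zero, mul_zero, Complex.exp_zero, mul_one] at hconst
  have hinv : Complex.exp (-c * y) * Complex.exp (c * y) = 1 := by
    rw [← Complex.exp_add, show -c * (y:ℂ) + c * y = 0 by ring, Complex.exp_zero]
  calc u y = u y * (Complex.exp (-c * y) * Complex.exp (c * y)) := by rw [hinv, mul_one]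
    _ = u y * Complex.exp (-c * y) * Complex.exp (c * y) := by ring
    _ = u 0 * Complex.exp (c * y) := by rw [hconst]

lemma exp_rigid {A B ω c : ℂ} (hω : ω ≠ 0) (b : ℝ)
    (h : ∀ y : ℝ, A * Complex.exp (ω * ((y + b : ℝ) : ℂ)) + B * Complex.exp (-ω * ((y + b : ℝ) : ℂ))
        = c * (A * Complex.exp (ω * y) + B * Complex.exp (-ω * y))) :
    A * (Complex.exp (ω * b) - c) = 0 ∧ B * (Complex.exp (-ω * b) - c) = 0 := by
  set P := A * (Complex.exp (ω * b) - c) with hP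
  set Q := B * (Complex.exp (-ω * b) - c) with hQ
  have hz : ∀ y : ℝ, P * Complex.exp (ω * y) + Q * Complex.exp (-ω * y) = 0 := by
    intro y
    have hy := h y
    have e1 : Complex.exp (ω * ((y + b : ℝ) : ℂ)) = Complex.exp (ω * y) * Complex.exp (ω * b) := by
      rw [← Complex.exp_add]; push_cast; ring_nf
    have e2 : Complex.exp (-ω * ((y + b : ℝ) : ℂ))
        = Complex.exp (-ω * y) * Complex.exp (-ω * b) := by
      rw [← Complex.exp_add]; push_cast; ring_nf
    rw [e1, e2] at hy
    rw [hP, hQ]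
    linear_combination hy
  have h0 := hz 0
  simp only [Complex.ofReal_zero, mul_zero, Complex.exp_zero, mul_one] at h0
  have hD : HasDerivAt (fun y : ℝ => P * Complex.exp (ω * y) + Q * Complex.exp (-ω * y))
      (P * (ω * Complex.exp (ω * ((0:ℝ):ℂ))) + Q * (-ω * Complex.exp (-ω * ((0:ℝ):ℂ)))) 0 :=
    ((hasDerivAt_cexp ω 0).const_mul P).add ((hasDerivAt_cexp (-ω) 0).const_mul Q)
  have hfun : (fun y : ℝ => P * Complex.exp (ω * y) + Q * Complex.exp (-ω * y))
      = fun _ => (0:ℂ) := funext hz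
  rw [hfun] at hD
  have hD0 := hD.unique (hasDerivAt_const 0 0)
  simp only [Complex.ofReal_zero, mul_zero, Complex.exp_zero, mul_one] at hD0
  -- hD0 : P * ω + Q * -ω = 0
  have hPQ : P = Q := by
    have h2 : ω * (P - Q) = 0 := by linear_combination hD0
    rcases mul_eq_zero.1 h2 with h' | h'
    · exact absurd h' hω
    · exact sub_eq_zero.1 h'
  have hQ0 : Q = 0 := by
    rw [hPQ] at h0
    have h2 : (2:ℂ) * Q = 0 := by linear_combination h0
    simpa using h2
  exact ⟨by rw [hPQ, hQ0], by rw [hQ0]⟩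

end DFT

namespace DFT2

def ce (m : ℤ) : ℂ := ((-(2 * Real.pi * m) : ℝ) : ℂ) * Complex.I

def E (m : ℤ) (x : ℝ) : ℂ := Complex.exp (ce m * x)

lemma ce_eq (m : ℤ) : ce m = ((-m : ℤ) : ℂ) * (2 * Real.pi * Complex.I) := by
  simp only [ce]
  push_cast
  ring

lemma exp_ce (m : ℤ) : Complex.exp (ce m) = 1 := by
  rw [ce_eq]
  exact Complex.exp_int_mul_two_pi_mul_I (-m)

lemma E_add (m : ℤ) (x t : ℝ) : E m (x + t) = E m x * E m t := by
  simp only [E]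
  rw [← Complex.exp_add]
  push_cast
  ring_nf

lemma E_per (m : ℤ) (x : ℝ) : E m (x + 1) = E m x := by
  rw [E_add]
  simp only [E, Complex.ofReal_one, mul_one, exp_ce, mul_one]

lemma continuous_E (m : ℤ) : Continuous (E m) :=
  Complex.continuous_exp.comp (continuous_const.mul Complex.continuous_ofReal)

lemma abs_E (m : ℤ) (x : ℝ) : ‖E m x‖ = 1 := by
  have h : ce m * x = ((-(2 * Real.pi * m) * x : ℝ) : ℂ) * Complex.I := by
    simp only [ce]; push_cast; ring
  rw [E, h, Complex.norm_exp]
  simp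

lemma hasDerivAt_E (m : ℤ) (x : ℝ) : HasDerivAt (E m) (ce m * E m x) x := by
  have h1 : HasDerivAt (fun t : ℝ => ((t : ℂ))) 1 x := by
    exact Complex.ofRealCLM.hasDerivAt (x := x)
  have h2 : HasDerivAt (fun t : ℝ => ce m * (t : ℂ)) (ce m) x := by
    simpa using h1.const_mul (ce m)
  unfold E
  simpa [mul_comm] using h2.cexp

lemma hasDerivAt_slice_x {f : ℝ × ℝ → ℂ} (hf : ContDiff ℝ (⊤ : ℕ∞) f) (x y : ℝ) :
    HasDerivAt (fun t => f (t, y)) (dX f (x, y)) x := by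
  have hd : HasFDerivAt f (fderiv ℝ f (x, y)) (x, y) :=
    (hf.differentiable (by simp) (x, y)).hasFDerivAt
  have hline : HasDerivAt (fun t : ℝ => ((t, y) : ℝ × ℝ)) ((1 : ℝ), (0 : ℝ)) x :=
    (hasDerivAt_id x).prodMk (hasDerivAt_const x y)
  exact hd.comp_hasDerivAt x hline

lemma hasDerivAt_slice_y {f : ℝ × ℝ → ℂ} (hf : ContDiff ℝ (⊤ : ℕ∞) f) (x y : ℝ) :
    HasDerivAt (fun t => f (x, t)) (dY f (x, y)) y := by
  have hd : HasFDerivAt f (fderiv ℝ f (x, y)) (x, y) :=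
    (hf.differentiable (by simp) (x, y)).hasFDerivAt
  have hline : HasDerivAt (fun t : ℝ => ((x, t) : ℝ × ℝ)) ((0 : ℝ), (1 : ℝ)) y :=
    (hasDerivAt_const y x).prodMk (hasDerivAt_id y)
  exact hd.comp_hasDerivAt y hline

lemma continuous_dX {f : ℝ × ℝ → ℂ} (hf : ContDiff ℝ (⊤ : ℕ∞) f) : Continuous (dX f) :=
  (hf.continuous_fderiv (by simp)).clm_apply continuous_const

lemma continuous_dY {f : ℝ × ℝ → ℂ} (hf : ContDiff ℝ (⊤ : ℕ∞) f) : Continuous (dY f) :=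
  (hf.continuous_fderiv (by simp)).clm_apply continuous_const

lemma hasDerivAt_param_integral {f : ℝ × ℝ → ℂ} (hf : ContDiff ℝ (⊤ : ℕ∞) f)
    {g : ℝ → ℂ} (hg : Continuous g) (y₀ : ℝ) :
    HasDerivAt (fun y => ∫ x in (0:ℝ)..1, g x * f (x, y))
      (∫ x in (0:ℝ)..1, g x * dY f (x, y₀)) y₀ := by
  have hcont : Continuous fun p : ℝ × ℝ => g p.1 * dY f p :=
    (hg.comp continuous_fst).mul (continuous_dY hf)
  obtain ⟨C, hC⟩ := (isCompact_Icc.prod (isCompact_Icc : IsCompact (Set.Icc (y₀ - 1) (y₀ + 1)))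
      : IsCompact ((Set.Icc (0:ℝ) 1) ×ˢ Set.Icc (y₀ - 1) (y₀ + 1))).exists_bound_of_continuousOn
      hcont.continuousOn
  have key := intervalIntegral.hasDerivAt_integral_of_dominated_loc_of_deriv_le
    (F := fun y x => g x * f (x, y)) (F' := fun y x => g x * dY f (x, y))
    (x₀ := y₀) (a := 0) (b := 1) (μ := volume) (bound := fun _ => C)
    (s := ball y₀ 1) (ball_mem_nhds y₀ one_pos)
    (Filter.Eventually.of_forall fun y =>
      ((hg.mul (hf.continuous.comp (Continuous.prodMk_left y))).aestronglyMeasurable))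
    ((hg.mul (hf.continuous.comp (Continuous.prodMk_left y₀))).intervalIntegrable 0 1)
    ((hg.mul ((continuous_dY hf).comp (Continuous.prodMk_left y₀))).aestronglyMeasurable)
    ?_ (intervalIntegrable_const) ?_
  · exact key.2
  · refine Filter.Eventually.of_forall fun x hx y hy => ?_
    refine hC (x, y) ?_
    constructor
    · exact ⟨le_of_lt (Set.mem_Ioc.1 (by simpa [Set.uIoc_of_le (zero_le_one' ℝ)] using hx)).1,
        (Set.mem_Ioc.1 (by simpa [Set.uIoc_of_le (zero_le_one' ℝ)] using hx)).2⟩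
    · have := mem_ball_iff_norm.1 hy
      have h2 : |y - y₀| ≤ 1 := le_of_lt (by simpa [Real.norm_eq_abs] using this)
      exact ⟨by linarith [abs_le.1 h2 |>.1], by linarith [abs_le.1 h2 |>.2]⟩
  · refine Filter.Eventually.of_forall fun x hx y hy => ?_
    exact (hasDerivAt_slice_y hf x y).const_mul (g x)

lemma ibp {f : ℝ × ℝ → ℂ} (hf : ContDiff ℝ (⊤ : ℕ∞) f)
    (hper : ∀ x y : ℝ, f (x + 1, y) = f (x, y)) (m : ℤ) (y : ℝ) :
    ∫ x in (0:ℝ)..1, E m x * dX f (x, y)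
      = (-(ce m)) * ∫ x in (0:ℝ)..1, E m x * f (x, y) := by
  have hG : ∀ x : ℝ, HasDerivAt (fun x => E m x * f (x, y))
      (ce m * E m x * f (x, y) + E m x * dX f (x, y)) x := by
    intro x
    have h := (hasDerivAt_E m x).mul (hasDerivAt_slice_x hf x y)
    exact h
  have hint : (∫ x in (0:ℝ)..1, (ce m * E m x * f (x, y) + E m x * dX f (x, y)))
      = E m 1 * f (1, y) - E m 0 * f (0, y) := by
    refine intervalIntegral.integral_eq_sub_of_hasDerivAt (f := fun x => E m x * f (x, y))
      (fun x _ => hG x) ?_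
    · apply Continuous.intervalIntegrable
      have h1 : Continuous fun x : ℝ => f (x, y) :=
        hf.continuous.comp (Continuous.prodMk_left y)
      have h2 : Continuous fun x : ℝ => dX f (x, y) :=
        (continuous_dX hf).comp (Continuous.prodMk_left y)
      exact ((continuous_const.mul (continuous_E m)).mul h1).add ((continuous_E m).mul h2)
  have hbd : E m 1 * f (1, y) - E m 0 * f (0, y) = 0 := by
    have h1 : E m 1 = 1 := by
      have := E_per m 0
      simpa [E, exp_ce] using this
    have h0 : E m 0 = 1 := by simp [E]
    have hf10 : f (1, y) = f (0, y) := by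
      have := hper 0 y
      simpa using this
    rw [h1, h0, hf10]
    ring
  rw [hbd] at hint
  have hsplit : (∫ x in (0:ℝ)..1, (ce m * E m x * f (x, y) + E m x * dX f (x, y)))
      = (∫ x in (0:ℝ)..1, ce m * (E m x * f (x, y)))
        + ∫ x in (0:ℝ)..1, E m x * dX f (x, y) := by
    rw [← intervalIntegral.integral_add]
    · congr 1
      funext x
      ring
    · apply Continuous.intervalIntegrable
      exact continuous_const.mul ((continuous_E m).mul
        (hf.continuous.comp (Continuous.prodMk_left y)))
    · apply Continuous.intervalIntegrable
      exact (continuous_E m).mul ((continuous_dX hf).comp (Continuous.prodMk_left y))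
  rw [hsplit, intervalIntegral.integral_const_mul] at hint
  linear_combination hint

lemma twist {f : ℝ × ℝ → ℂ} (hf : ContDiff ℝ (⊤ : ℕ∞) f) (a b : ℝ)
    (hper1 : ∀ x y : ℝ, f (x + 1, y) = f (x, y))
    (hper2 : ∀ x y : ℝ, f (x + a, y + b) = f (x, y)) (m : ℤ) (y : ℝ) :
    (∫ x in (0:ℝ)..1, E m x * f (x, y + b))
      = E m a * ∫ x in (0:ℝ)..1, E m x * f (x, y) := by
  have hshift : ∀ x : ℝ, f (x, y + b) = f (x - a, y) := by
    intro x
    have := hper2 (x - a) y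
    simpa using this
  have h1 : (∫ x in (0:ℝ)..1, E m x * f (x, y + b))
      = ∫ x in (0:ℝ)..1, (fun u => E m (u + a) * f (u, y)) (x - a) := by
    apply intervalIntegral.integral_congr
    intro x _
    simp only [hshift x]
    congr 2
    ring
  rw [h1, intervalIntegral.integral_comp_sub_right (fun u => E m (u + a) * f (u, y)) a]
  have h2 : ∀ u : ℝ, E m (u + a) * f (u, y) = E m a * (E m u * f (u, y)) := by
    intro u
    rw [E_add]
    ring
  have h3 : (∫ x in (0:ℝ)-a..(1:ℝ)-a, E m (x + a) * f (x, y))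
      = E m a * ∫ x in (0:ℝ)-a..(1:ℝ)-a, E m x * f (x, y) := by
    rw [← intervalIntegral.integral_const_mul]
    apply intervalIntegral.integral_congr
    intro x _
    exact h2 x
  rw [h3]
  congr 1
  have hper : Function.Periodic (fun u => E m u * f (u, y)) 1 := by
    intro u
    simp only [E_per, hper1]
  rw [show (1:ℝ) - a = 0 - a + 1 by ring, show (0:ℝ) - a = 0 - a by ring]
  have := hper.intervalIntegral_add_eq (0 - a) 0
  simpa using this

lemma fourier_vanish {f : ℝ → ℂ} (hf : Continuous f) (hper : ∀ x, f (x + 1) = f x)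
    (h : ∀ m : ℤ, (∫ x in (0:ℝ)..1, E m x * f x) = 0) (x : ℝ) : f x = 0 := by
  haveI : Fact (0 < (1:ℝ)) := ⟨one_pos⟩
  have hperi : Function.Periodic f 1 := hper
  have hcont : Continuous hperi.lift := Continuous.quotient_liftOn' hf _
  set F : C(AddCircle (1:ℝ), ℂ) := ⟨hperi.lift, hcont⟩ with hF
  have hFcoe : ∀ t : ℝ, F (t : AddCircle (1:ℝ)) = f t := fun t => hperi.lift_coe t
  have hcoeff : ∀ m : ℤ, fourierCoeff (F : AddCircle (1:ℝ) → ℂ) m = 0 := by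
    intro m
    rw [fourierCoeff_eq_intervalIntegral _ m 0]
    have heq : (∫ t in (0:ℝ)..0 + 1, (fourier (-m) (t : AddCircle (1:ℝ)) : ℂ) • F (t : AddCircle (1:ℝ)))
        = ∫ t in (0:ℝ)..1, E m t * f t := by
      rw [zero_add]
      apply intervalIntegral.integral_congr
      intro t _
      show (fourier (-m) (t : AddCircle (1:ℝ)) : ℂ) • F (t : AddCircle (1:ℝ)) = E m t * f t
      rw [smul_eq_mul, hFcoe t, fourier_coe_apply]
      congr 2
      simp only [E, ce]
      push_cast
      ring
    rw [heq, h m]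
    simp
  have hsummable : Summable (fourierCoeff (F : AddCircle (1:ℝ) → ℂ)) := by
    have : (fourierCoeff (F : AddCircle (1:ℝ) → ℂ)) = fun _ => 0 := funext hcoeff
    rw [this]; exact summable_zero
  have hS := hasSum_fourier_series_of_summable hsummable
  have hz : (fun i : ℤ => fourierCoeff (F : AddCircle (1:ℝ) → ℂ) i • fourier i)
      = fun _ => (0 : C(AddCircle (1:ℝ), ℂ)) := by
    funext i
    rw [hcoeff i, zero_smul]
  rw [hz] at hS
  have hF0 : F = 0 := (hS.unique hasSum_zero)
  have := hFcoe x
  rw [hF0] at this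
  simpa using this.symm

lemma comb_deriv {ψ1 ψ2 : ℝ → ℂ} {L T ω : ℂ} (hω : ω ^ 2 = T ^ 2 - L ^ 2)
    (h1 : ∀ y, HasDerivAt ψ1 (Complex.I * L * ψ2 y - T * ψ1 y) y)
    (h2 : ∀ y, HasDerivAt ψ2 (Complex.I * L * ψ1 y + T * ψ2 y) y) (y : ℝ) :
    HasDerivAt (fun y => Complex.I * L * ψ2 y - (T + ω) * ψ1 y)
      (-ω * (Complex.I * L * ψ2 y - (T + ω) * ψ1 y)) y := by
  have h := ((h2 y).const_mul (Complex.I * L)).sub ((h1 y).const_mul (T + ω))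
  refine h.congr_deriv ?_
  have hI : (Complex.I) ^ 2 = -1 := Complex.I_sq
  linear_combination -(ψ1 y) * hω + L ^ 2 * ψ1 y * hI

lemma int_sq_ge {m : ℤ} (h : m ≠ 0) : (1:ℝ) ≤ (m:ℝ) ^ 2 := by
  have h1 : (1:ℤ) ≤ m ^ 2 := by nlinarith [Int.one_le_abs h, _root_.sq_abs m, abs_nonneg m]
  exact_mod_cast h1

lemma arith (a b : ℝ) (ha : |a| ≤ 1 / 2) (hb : 0 < b) (hab : 1 ≤ a ^ 2 + b ^ 2)
    (m n : ℤ) (hmn : ¬(m = 0 ∧ n = 0)) :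
    1 ≤ (m:ℝ) ^ 2 * b ^ 2 + ((n:ℝ) - m * a) ^ 2 := by
  have ha2 : a ^ 2 ≤ 1 / 4 := by nlinarith [abs_nonneg a, _root_.sq_abs a]
  have hb2 : 3 / 4 ≤ b ^ 2 := by nlinarith
  rcases eq_or_ne m 0 with hm | hm
  · subst hm
    have hn : n ≠ 0 := fun h => hmn ⟨rfl, h⟩
    have h1 := int_sq_ge hn
    push_cast
    nlinarith
  · rcases le_or_gt 2 |m| with h2 | h2
    · have h2' : (2:ℝ) ≤ |(m:ℝ)| := by exact_mod_cast h2
      nlinarith [_root_.sq_abs (m:ℝ), sq_nonneg ((n:ℝ) - m * a), abs_nonneg (m:ℝ)]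
    · have h1 : m = 1 ∨ m = -1 := by
        have h3 := abs_lt.mp h2
        omega
      have hm2 : (m:ℝ) ^ 2 = 1 := by rcases h1 with h | h <;> simp [h]
      have hmabs : |(m:ℝ)| = 1 := by rcases h1 with h | h <;> simp [h]
      have hsq : a ^ 2 ≤ ((n:ℝ) - m * a) ^ 2 := by
        rcases eq_or_ne n 0 with hn | hn
        · subst hn
          simp only [Int.cast_zero, zero_sub, neg_sq]
          nlinarith [hm2]
        · have h1n : (1:ℝ) ≤ |(n:ℝ)| := by exact_mod_cast Int.one_le_abs hn
          have habs : |(n:ℝ) * ((m:ℝ) * a)| ≤ |(n:ℝ)| * (1 / 2) := by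
            rw [abs_mul, abs_mul, hmabs, one_mul]
            exact mul_le_mul_of_nonneg_left ha (abs_nonneg _)
          nlinarith [le_abs_self ((n:ℝ) * ((m:ℝ) * a)), neg_abs_le ((n:ℝ) * ((m:ℝ) * a)),
            _root_.sq_abs (n:ℝ), hm2]
      nlinarith

lemma exp_real_I_eq {r s : ℝ}
    (h : Complex.exp ((r:ℂ) * Complex.I) = Complex.exp ((s:ℂ) * Complex.I)) :
    ∃ n : ℤ, r = s + 2 * Real.pi * n := by
  rw [Complex.exp_eq_exp_iff_exists_int] at h
  obtain ⟨n, hn⟩ := h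
  refine ⟨n, ?_⟩
  have him := congrArg Complex.im hn
  simp [Complex.add_im, Complex.mul_im] at him
  linarith [him]

lemma ce_mul_real (m : ℤ) (a : ℝ) : ce m * (a:ℂ) = ((-(2 * Real.pi * m) * a : ℝ):ℂ) * Complex.I := by
  simp only [ce]
  push_cast
  ring

lemma kb_absurd (a b lam : ℝ) (ha : |a| ≤ 1 / 2) (hb : 0 < b) (hab : 1 ≤ a ^ 2 + b ^ 2)
    (hlam : 0 < lam) (hlt : lam * b < 2 * Real.pi)
    (m n : ℤ) (κ : ℝ) (hκpos : 0 < κ) (hκ2 : κ ^ 2 = lam ^ 2 - (2 * Real.pi * m) ^ 2)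
    (heq : κ * b = 2 * Real.pi * ((n:ℝ) - m * a)) : False := by
  have hπ := Real.pi_pos
  have hmn : ¬(m = 0 ∧ n = 0) := by
    rintro ⟨hm, hn⟩
    rw [hm, hn] at heq
    norm_num at heq
    rcases heq with h | h <;> linarith
  have harith := arith a b ha hb hab m n hmn
  have hsq : (κ * b) ^ 2 = (2 * Real.pi * ((n:ℝ) - m * a)) ^ 2 := by rw [heq]
  have hlb : 0 < lam * b := mul_pos hlam hb
  have e1 : κ ^ 2 * b ^ 2 = (lam ^ 2 - (2 * Real.pi * m) ^ 2) * b ^ 2 := by rw [hκ2]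
  have e2 : κ ^ 2 * b ^ 2 = (2 * Real.pi) ^ 2 * ((n:ℝ) - m * a) ^ 2 := by linear_combination hsq
  have e3 : (2 * Real.pi) ^ 2 * 1 ≤ (2 * Real.pi) ^ 2 * ((m:ℝ) ^ 2 * b ^ 2 + ((n:ℝ) - m * a) ^ 2) :=
    mul_le_mul_of_nonneg_left harith (by positivity)
  have h2 : (2 * Real.pi) ^ 2 ≤ lam ^ 2 * b ^ 2 := by nlinarith [e1, e2, e3]
  have h1 : lam ^ 2 * b ^ 2 < (2 * Real.pi) ^ 2 := by
    nlinarith [mul_pos (sub_pos.2 hlt) (by positivity : (0:ℝ) < 2 * Real.pi + lam * b)]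
  linarith

lemma rep_vanish {ψ1 ψ2 : ℝ → ℂ} {L T ω cc : ℂ} {b : ℝ}
    (hω2 : ω ^ 2 = T ^ 2 - L ^ 2) (hωne : ω ≠ 0)
    (h1 : ∀ y, HasDerivAt ψ1 (Complex.I * L * ψ2 y - T * ψ1 y) y)
    (h2 : ∀ y, HasDerivAt ψ2 (Complex.I * L * ψ1 y + T * ψ2 y) y)
    (ht1 : ∀ y : ℝ, ψ1 (y + b) = cc * ψ1 y)
    (hc1 : Complex.exp (ω * b) ≠ cc) (hc2 : Complex.exp (-ω * b) ≠ cc) (y : ℝ) :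
    ψ1 y = 0 := by
  have hv := comb_deriv hω2 h1 h2
  have hω2' : (-ω) ^ 2 = T ^ 2 - L ^ 2 := by rw [← hω2]; ring
  have hw := comb_deriv hω2' h1 h2
  have hvexp : ∀ t : ℝ, Complex.I * L * ψ2 t - (T + ω) * ψ1 t
      = (Complex.I * L * ψ2 0 - (T + ω) * ψ1 0) * Complex.exp (-ω * t) := by
    intro t
    exact DFT.ode_exp (u := fun t => Complex.I * L * ψ2 t - (T + ω) * ψ1 t) (c := -ω)
      (fun t => hv t) t
  have hwexp : ∀ t : ℝ, Complex.I * L * ψ2 t - (T + -ω) * ψ1 t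
      = (Complex.I * L * ψ2 0 - (T + -ω) * ψ1 0) * Complex.exp (ω * t) := by
    intro t
    refine DFT.ode_exp (u := fun t => Complex.I * L * ψ2 t - (T + -ω) * ψ1 t) (c := ω)
      (fun t => ?_) t
    have := hw t
    convert this using 1
    ring
  set A := (Complex.I * L * ψ2 0 - (T + -ω) * ψ1 0) / (2 * ω) with hA
  set B := -(Complex.I * L * ψ2 0 - (T + ω) * ψ1 0) / (2 * ω) with hB
  have h2ωne : (2:ℂ) * ω ≠ 0 := by simpa using hωne
  have hrep : ∀ t : ℝ, ψ1 t = A * Complex.exp (ω * t) + B * Complex.exp (-ω * t) := by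
    intro t
    have e1 := hvexp t
    have e2 := hwexp t
    rw [hA, hB, div_mul_eq_mul_div, div_mul_eq_mul_div, ← add_div, eq_div_iff h2ωne]
    linear_combination e2 - e1
  have htw : ∀ t : ℝ, A * Complex.exp (ω * ((t + b : ℝ):ℂ)) + B * Complex.exp (-ω * ((t + b : ℝ):ℂ))
      = cc * (A * Complex.exp (ω * t) + B * Complex.exp (-ω * t)) := by
    intro t
    rw [← hrep t, ← hrep (t + b)]
    exact ht1 t
  obtain ⟨hA0, hB0⟩ := DFT.exp_rigid hωne b htw
  have hAz : A = 0 := by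
    rcases mul_eq_zero.1 hA0 with h | h
    · exact h
    · exact absurd (sub_eq_zero.1 h) hc1
  have hBz : B = 0 := by
    rcases mul_eq_zero.1 hB0 with h | h
    · exact h
    · exact absurd (sub_eq_zero.1 h) hc2
  rw [hrep y, hAz, hBz]
  ring

lemma ma_absurd (a b lam : ℝ) (ha : |a| ≤ 1 / 2) (hb : 0 < b) (hab : 1 ≤ a ^ 2 + b ^ 2)
    (hlam : 0 < lam) (hlt : lam * b < 2 * Real.pi) (m n : ℤ)
    (hδ0 : (2 * Real.pi * m) ^ 2 = lam ^ 2) (hma : (m:ℝ) * a = -(n:ℝ)) : False := by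
  have hπ := Real.pi_pos
  have ha2 : a ^ 2 ≤ 1 / 4 := by nlinarith [abs_nonneg a, _root_.sq_abs a]
  have hb2 : 3 / 4 ≤ b ^ 2 := by nlinarith
  have hmne : m ≠ 0 := by
    rintro rfl
    simp at hδ0
    nlinarith
  have hm1 := int_sq_ge hmne
  have h1 : lam ^ 2 * b ^ 2 < (2 * Real.pi) ^ 2 := by
    nlinarith [mul_pos (sub_pos.2 hlt) (by positivity : (0:ℝ) < 2 * Real.pi + lam * b),
      mul_pos hlam hb]
  have hmb : (m:ℝ) ^ 2 * b ^ 2 < 1 := by nlinarith [mul_pos hπ hπ, sq_nonneg b]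
  rcases eq_or_ne n 0 with hn | hn
  · have hane : a = 0 := by
      have hm0 : (m:ℝ) ≠ 0 := Int.cast_ne_zero.2 hmne
      rw [hn] at hma
      simp at hma
      tauto
    rw [hane] at hab
    simp at hab
    rw [abs_of_pos hb] at hab
    nlinarith
  · have h1n : (1:ℝ) ≤ |(n:ℝ)| := by exact_mod_cast Int.one_le_abs hn
    have habs : |(m:ℝ)| * |a| = |(n:ℝ)| := by rw [← abs_mul, hma, abs_neg]
    have hm2 : 2 ≤ |(m:ℝ)| := by nlinarith [abs_nonneg (m:ℝ), abs_nonneg a]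
    nlinarith [_root_.sq_abs (m:ℝ)]

lemma affine_vanish {u1 u2 : ℝ → ℂ} {L T cc : ℂ} {b : ℝ}
    (hTL : T ^ 2 = L ^ 2) (hcc1 : cc ≠ 1)
    (g1 : ∀ t, HasDerivAt u1 (Complex.I * L * u2 t - T * u1 t) t)
    (g2 : ∀ t, HasDerivAt u2 (Complex.I * L * u1 t + T * u2 t) t)
    (gt : ∀ t : ℝ, u1 (t + b) = cc * u1 t) (y : ℝ) : u1 y = 0 := by
  have hv : ∀ t, HasDerivAt (fun t => Complex.I * L * u2 t - T * u1 t) 0 t := by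
    intro t
    have h := comb_deriv (ω := 0) (by rw [hTL]; ring) g1 g2 t
    simpa using h
  have hvc : ∀ t : ℝ, Complex.I * L * u2 t - T * u1 t = Complex.I * L * u2 0 - T * u1 0 :=
    fun t => DFT.ode_const hv t
  set V : ℂ := Complex.I * L * u2 0 - T * u1 0 with hV
  have g1' : ∀ t, HasDerivAt u1 V t := by
    intro t
    have h := g1 t
    rwa [hvc t] at h
  have haff : ∀ t : ℝ, u1 t = u1 0 + V * t := by
    intro t
    have hg : ∀ s : ℝ, HasDerivAt (fun s : ℝ => u1 s - V * (s:ℂ)) 0 s := by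
      intro s
      have h1s : HasDerivAt (fun t : ℝ => ((t : ℂ))) 1 s := by
        exact Complex.ofRealCLM.hasDerivAt (x := s)
      have hlin : HasDerivAt (fun s : ℝ => V * (s:ℂ)) V s := by simpa using h1s.const_mul V
      have := (g1' s).sub hlin
      exact this.congr_deriv (sub_self V)
    have h := DFT.ode_const hg t
    push_cast at h ⊢
    linear_combination h
  have e0 : u1 0 + V * (((0:ℝ) + b : ℝ):ℂ) = cc * (u1 0 + V * ((0:ℝ):ℂ)) := by
    rw [← haff, ← haff]
    exact gt 0
  have e1 : u1 0 + V * (((1:ℝ) + b : ℝ):ℂ) = cc * (u1 0 + V * ((1:ℝ):ℂ)) := by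
    rw [← haff, ← haff]
    exact gt 1
  push_cast at e0 e1
  have hVz : V = 0 := by
    have hsub : (1 - cc) * V = 0 := by linear_combination e1 - e0
    rcases mul_eq_zero.1 hsub with h' | h'
    · exact absurd (by linear_combination -h' : cc = 1) hcc1
    · exact h'
  have hPz : u1 0 = 0 := by
    rw [hVz] at e0
    have h2 : (1 - cc) * u1 0 = 0 := by linear_combination e0
    rcases mul_eq_zero.1 h2 with h' | h'
    · exact absurd (by linear_combination -h' : cc = 1) hcc1
    · exact h'
  rw [haff y, hVz, hPz]
  ring

lemma mode_vanish (a b lam : ℝ) (ha : |a| ≤ 1 / 2) (hb : 0 < b) (hab : 1 ≤ a ^ 2 + b ^ 2)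
    (hlam : 0 < lam) (hlt : lam * b < 2 * Real.pi)
    (m : ℤ) (ψ1 ψ2 : ℝ → ℂ)
    (h1 : ∀ y, HasDerivAt ψ1
      (Complex.I * (lam:ℂ) * ψ2 y - ((2 * Real.pi * (m:ℝ) : ℝ):ℂ) * ψ1 y) y)
    (h2 : ∀ y, HasDerivAt ψ2
      (Complex.I * (lam:ℂ) * ψ1 y + ((2 * Real.pi * (m:ℝ) : ℝ):ℂ) * ψ2 y) y)
    (ht1 : ∀ y : ℝ, ψ1 (y + b) = E m a * ψ1 y)
    (ht2 : ∀ y : ℝ, ψ2 (y + b) = E m a * ψ2 y) (y : ℝ) :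
    ψ1 y = 0 ∧ ψ2 y = 0 := by
  have hπ := Real.pi_pos
  set L : ℂ := ((lam:ℝ):ℂ) with hL
  set T : ℂ := ((2 * Real.pi * (m:ℝ) : ℝ):ℂ) with hT
  set cc : ℂ := E m a with hcc
  have h1' : ∀ t, HasDerivAt ψ2 (Complex.I * L * ψ1 t - (-T) * ψ2 t) t := by
    intro t
    have h := h2 t
    convert h using 1
    ring
  have h2' : ∀ t, HasDerivAt ψ1 (Complex.I * L * ψ2 t + (-T) * ψ1 t) t := by
    intro t
    have h := h1 t
    convert h using 1
    ring
  have hEa : cc = Complex.exp (((-(2 * Real.pi * m) * a : ℝ):ℂ) * Complex.I) := by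
    rw [hcc]
    rw [E, ce_mul_real]
  rcases lt_trichotomy ((2 * Real.pi * m) ^ 2 - lam ^ 2) 0 with hδ | hδ | hδ
  · -- oscillatory case
    set κ : ℝ := Real.sqrt (lam ^ 2 - (2 * Real.pi * m) ^ 2) with hκ
    have hκ2 : κ ^ 2 = lam ^ 2 - (2 * Real.pi * m) ^ 2 := Real.sq_sqrt (by linarith)
    have hκpos : 0 < κ := Real.sqrt_pos.2 (by linarith)
    set ω : ℂ := Complex.I * ((κ:ℝ):ℂ) with hω
    have hcast : ((κ:ℝ):ℂ) ^ 2 = L ^ 2 - T ^ 2 := by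
      rw [hL, hT]
      exact_mod_cast hκ2
    have hω2 : ω ^ 2 = T ^ 2 - L ^ 2 := by
      rw [hω]
      linear_combination ((κ:ℝ):ℂ) ^ 2 * Complex.I_sq - hcast
    have hωne : ω ≠ 0 := by
      rw [hω]
      simp [Complex.I_ne_zero]
      exact_mod_cast hκpos.ne'
    have hc1 : Complex.exp (ω * (b:ℂ)) ≠ cc := by
      intro h
      have hrw : ω * (b:ℂ) = ((κ * b : ℝ):ℂ) * Complex.I := by
        rw [hω]; push_cast; ring
      rw [hrw, hEa] at h
      obtain ⟨n, hn⟩ := exp_real_I_eq h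
      exact kb_absurd a b lam ha hb hab hlam hlt m n κ hκpos hκ2 (by linear_combination hn)
    have hc2 : Complex.exp (-ω * (b:ℂ)) ≠ cc := by
      intro h
      have hrw : -ω * (b:ℂ) = ((-(κ * b) : ℝ):ℂ) * Complex.I := by
        rw [hω]; push_cast; ring
      rw [hrw, hEa] at h
      obtain ⟨n, hn⟩ := exp_real_I_eq h
      refine kb_absurd a b lam ha hb hab hlam hlt (-m) (-n) κ hκpos ?_ ?_
      · rw [hκ2]
        push_cast
        ring
      · push_cast
        push_cast at hn
        linarith
    constructor
    · exact rep_vanish hω2 hωne h1 h2 ht1 hc1 hc2 y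
    · have hω2' : ω ^ 2 = (-T) ^ 2 - L ^ 2 := by rw [hω2]; ring
      exact rep_vanish hω2' hωne h1' h2' ht2 hc1 hc2 y
  · -- affine case
    have hTL : T ^ 2 = L ^ 2 := by
      rw [hT, hL]
      exact_mod_cast (by linarith : (2 * Real.pi * m) ^ 2 = lam ^ 2)
    have hcc1 : cc ≠ 1 := by
      intro h
      rw [hEa] at h
      have h1x : Complex.exp (((-(2 * Real.pi * m) * a : ℝ):ℂ) * Complex.I)
          = Complex.exp (((0:ℝ):ℂ) * Complex.I) := by rw [h]; simp
      obtain ⟨n, hn⟩ := exp_real_I_eq h1x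
      have h2x : 2 * Real.pi * ((m:ℝ) * a + n) = 0 := by linear_combination -hn
      have h3x : (m:ℝ) * a = -(n:ℝ) := by
        rcases mul_eq_zero.1 h2x with h' | h'
        · nlinarith
        · linarith
      exact ma_absurd a b lam ha hb hab hlam hlt m n (by linarith) h3x
    constructor
    · exact affine_vanish hTL hcc1 h1 h2 ht1 y
    · exact affine_vanish (by linear_combination hTL : (-T) ^ 2 = L ^ 2) hcc1 h1' h2' ht2 y
  · -- exponential case
    set r : ℝ := Real.sqrt ((2 * Real.pi * m) ^ 2 - lam ^ 2) with hr
    have hr2 : r ^ 2 = (2 * Real.pi * m) ^ 2 - lam ^ 2 := Real.sq_sqrt (by linarith)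
    have hrpos : 0 < r := Real.sqrt_pos.2 (by linarith)
    set ω : ℂ := ((r:ℝ):ℂ) with hω
    have hω2 : ω ^ 2 = T ^ 2 - L ^ 2 := by
      rw [hω, hT, hL]
      exact_mod_cast hr2
    have hωne : ω ≠ 0 := by
      rw [hω]
      exact_mod_cast hrpos.ne'
    have habs_cc : ‖cc‖ = 1 := by rw [hcc]; exact abs_E m a
    have hc1 : Complex.exp (ω * (b:ℂ)) ≠ cc := by
      intro h
      have : ‖Complex.exp (ω * (b:ℂ))‖ = 1 := by rw [h, habs_cc]
      rw [hω, show ((r:ℝ):ℂ) * (b:ℂ) = ((r * b : ℝ):ℂ) by push_cast; ring] at this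
      rw [Complex.norm_exp] at this
      simp only [Complex.ofReal_re] at this
      nlinarith [Real.add_one_le_exp (r * b), mul_pos hrpos hb]
    have hc2 : Complex.exp (-ω * (b:ℂ)) ≠ cc := by
      intro h
      have : ‖Complex.exp (-ω * (b:ℂ))‖ = 1 := by rw [h, habs_cc]
      rw [hω, show -((r:ℝ):ℂ) * (b:ℂ) = ((-(r * b) : ℝ):ℂ) by push_cast; ring] at this
      rw [Complex.norm_exp] at this
      simp only [Complex.ofReal_re] at this
      have hlt1 : Real.exp (-(r * b)) < 1 := by
        rw [Real.exp_lt_one_iff]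
        nlinarith [mul_pos hrpos hb]
      linarith [hlt1, this.le]
    constructor
    · exact rep_vanish hω2 hωne h1 h2 ht1 hc1 hc2 y
    · have hω2' : ω ^ 2 = (-T) ^ 2 - L ^ 2 := by rw [hω2]; ring
      exact rep_vanish hω2' hωne h1' h2' ht2 hc1 hc2 y

lemma key (a b lam : ℝ) (ha : |a| ≤ 1 / 2) (hb : 0 < b) (hab : 1 ≤ a ^ 2 + b ^ 2)
    (hlam : 0 < lam) (hlt : lam < 2 * Real.pi / b)
    (φ : ℝ × ℝ → ℂ × ℂ) (hφ : ContDiff ℝ (⊤ : ℕ∞) φ)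
    (hp1 : ∀ p : ℝ × ℝ, φ (p.1 + 1, p.2) = φ p)
    (hp2 : ∀ p : ℝ × ℝ, φ (p.1 + a, p.2 + b) = φ p)
    (he1 : ∀ p : ℝ × ℝ, dX (fun q => (φ q).2) p - Complex.I * dY (fun q => (φ q).2) p
      = (lam:ℂ) * (φ p).1)
    (he2 : ∀ p : ℝ × ℝ, -(dX (fun q => (φ q).1) p + Complex.I * dY (fun q => (φ q).1) p)
      = (lam:ℂ) * (φ p).2) :
    φ = 0 := by
  have hlb : lam * b < 2 * Real.pi := (lt_div_iff₀ hb).1 hlt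
  set φ1 : ℝ × ℝ → ℂ := fun q => (φ q).1 with hφ1def
  set φ2 : ℝ × ℝ → ℂ := fun q => (φ q).2 with hφ2def
  have hφ1 : ContDiff ℝ (⊤ : ℕ∞) φ1 := contDiff_fst.comp hφ
  have hφ2 : ContDiff ℝ (⊤ : ℕ∞) φ2 := contDiff_snd.comp hφ
  have hq1a : ∀ x y : ℝ, φ1 (x + 1, y) = φ1 (x, y) := fun x y =>
    congrArg Prod.fst (hp1 (x, y))
  have hq2a : ∀ x y : ℝ, φ1 (x + a, y + b) = φ1 (x, y) := fun x y =>
    congrArg Prod.fst (hp2 (x, y))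
  have hq1b : ∀ x y : ℝ, φ2 (x + 1, y) = φ2 (x, y) := fun x y =>
    congrArg Prod.snd (hp1 (x, y))
  have hq2b : ∀ x y : ℝ, φ2 (x + a, y + b) = φ2 (x, y) := fun x y =>
    congrArg Prod.snd (hp2 (x, y))
  have hdY1 : ∀ p, dY φ1 p = Complex.I * (lam:ℂ) * φ2 p + Complex.I * dX φ1 p := by
    intro p
    have h := he2 p
    linear_combination Complex.I * h + dY φ1 p * Complex.I_sq
  have hdY2 : ∀ p, dY φ2 p = Complex.I * (lam:ℂ) * φ1 p - Complex.I * dX φ2 p := by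
    intro p
    have h := he1 p
    linear_combination Complex.I * h + dY φ2 p * Complex.I_sq
  set Ψ1 : ℤ → ℝ → ℂ := fun m y => ∫ x in (0:ℝ)..1, E m x * φ1 (x, y) with hΨ1
  set Ψ2 : ℤ → ℝ → ℂ := fun m y => ∫ x in (0:ℝ)..1, E m x * φ2 (x, y) with hΨ2
  have hIce : ∀ m : ℤ, Complex.I * (-(ce m)) = -(((2 * Real.pi * (m:ℝ) : ℝ)):ℂ) := by
    intro m
    simp only [ce]
    push_cast
    linear_combination (2 * (Real.pi:ℂ) * ((m:ℤ):ℂ)) * Complex.I_sq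
  have hD1 : ∀ (m : ℤ) (y : ℝ), HasDerivAt (Ψ1 m)
      (Complex.I * (lam:ℂ) * Ψ2 m y - ((2 * Real.pi * (m:ℝ) : ℝ):ℂ) * Ψ1 m y) y := by
    intro m y
    have h := hasDerivAt_param_integral hφ1 (continuous_E m) y
    have hval : (∫ x in (0:ℝ)..1, E m x * dY φ1 (x, y))
        = Complex.I * (lam:ℂ) * Ψ2 m y - ((2 * Real.pi * (m:ℝ) : ℝ):ℂ) * Ψ1 m y := by
      simp only [hdY1]
      have h1i : IntervalIntegrable (fun x => Complex.I * (lam:ℂ) * (E m x * φ2 (x, y)))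
          volume 0 1 := by
        apply Continuous.intervalIntegrable
        exact continuous_const.mul ((continuous_E m).mul
          (hφ2.continuous.comp (Continuous.prodMk_left y)))
      have h2i : IntervalIntegrable (fun x => Complex.I * (E m x * dX φ1 (x, y)))
          volume 0 1 := by
        apply Continuous.intervalIntegrable
        exact continuous_const.mul ((continuous_E m).mul
          ((continuous_dX hφ1).comp (Continuous.prodMk_left y)))
      rw [show (∫ x in (0:ℝ)..1, E m x *
            (Complex.I * (lam:ℂ) * φ2 (x, y) + Complex.I * dX φ1 (x, y)))
          = ∫ x in (0:ℝ)..1, (Complex.I * (lam:ℂ) * (E m x * φ2 (x, y))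
              + Complex.I * (E m x * dX φ1 (x, y))) from
        intervalIntegral.integral_congr fun x _ => by ring]
      rw [intervalIntegral.integral_add h1i h2i, intervalIntegral.integral_const_mul,
        intervalIntegral.integral_const_mul, ibp hφ1 hq1a m y]
      rw [hΨ1, hΨ2]
      linear_combination (∫ x in (0:ℝ)..1, E m x * φ1 (x, y)) * hIce m
    rw [← hval]
    exact h
  have hD2 : ∀ (m : ℤ) (y : ℝ), HasDerivAt (Ψ2 m)
      (Complex.I * (lam:ℂ) * Ψ1 m y + ((2 * Real.pi * (m:ℝ) : ℝ):ℂ) * Ψ2 m y) y := by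
    intro m y
    have h := hasDerivAt_param_integral hφ2 (continuous_E m) y
    have hval : (∫ x in (0:ℝ)..1, E m x * dY φ2 (x, y))
        = Complex.I * (lam:ℂ) * Ψ1 m y + ((2 * Real.pi * (m:ℝ) : ℝ):ℂ) * Ψ2 m y := by
      simp only [hdY2]
      have h1i : IntervalIntegrable (fun x => Complex.I * (lam:ℂ) * (E m x * φ1 (x, y)))
          volume 0 1 := by
        apply Continuous.intervalIntegrable
        exact continuous_const.mul ((continuous_E m).mul
          (hφ1.continuous.comp (Continuous.prodMk_left y)))
      have h2i : IntervalIntegrable (fun x => -(Complex.I) * (E m x * dX φ2 (x, y)))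
          volume 0 1 := by
        apply Continuous.intervalIntegrable
        exact continuous_const.mul ((continuous_E m).mul
          ((continuous_dX hφ2).comp (Continuous.prodMk_left y)))
      rw [show (∫ x in (0:ℝ)..1, E m x *
            (Complex.I * (lam:ℂ) * φ1 (x, y) - Complex.I * dX φ2 (x, y)))
          = ∫ x in (0:ℝ)..1, (Complex.I * (lam:ℂ) * (E m x * φ1 (x, y))
              + (-(Complex.I)) * (E m x * dX φ2 (x, y))) from
        intervalIntegral.integral_congr fun x _ => by ring]
      rw [intervalIntegral.integral_add h1i h2i, intervalIntegral.integral_const_mul,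
        intervalIntegral.integral_const_mul, ibp hφ2 hq1b m y]
      rw [hΨ1, hΨ2]
      linear_combination (-(∫ x in (0:ℝ)..1, E m x * φ2 (x, y))) * hIce m
    rw [← hval]
    exact h
  have htw1 : ∀ (m : ℤ) (y : ℝ), Ψ1 m (y + b) = E m a * Ψ1 m y := fun m y =>
    twist hφ1 a b hq1a hq2a m y
  have htw2 : ∀ (m : ℤ) (y : ℝ), Ψ2 m (y + b) = E m a * Ψ2 m y := fun m y =>
    twist hφ2 a b hq1b hq2b m y
  have hmode : ∀ (m : ℤ) (y : ℝ), Ψ1 m y = 0 ∧ Ψ2 m y = 0 := fun m y =>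
    mode_vanish a b lam ha hb hab hlam hlb m (Ψ1 m) (Ψ2 m) (hD1 m) (hD2 m)
      (htw1 m) (htw2 m) y
  have hzero1 : ∀ p : ℝ × ℝ, φ1 p = 0 := by
    rintro ⟨x, y⟩
    have hcont : Continuous fun x : ℝ => φ1 (x, y) :=
      hφ1.continuous.comp (Continuous.prodMk_left y)
    exact fourier_vanish hcont (fun x => hq1a x y) (fun m => (hmode m y).1) x
  have hzero2 : ∀ p : ℝ × ℝ, φ2 p = 0 := by
    rintro ⟨x, y⟩
    have hcont : Continuous fun x : ℝ => φ2 (x, y) :=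
      hφ2.continuous.comp (Continuous.prodMk_left y)
    exact fourier_vanish hcont (fun x => hq1b x y) (fun m => (hmode m y).2) x
  funext p
  exact Prod.ext (hzero1 p) (hzero2 p)

lemma existence (a b : ℝ) (hb : 0 < b) :
    ∃ φ : ℝ × ℝ → ℂ × ℂ, ContDiff ℝ (⊤ : ℕ∞) φ ∧ φ ≠ 0 ∧
      (∀ p : ℝ × ℝ, φ (p.1 + 1, p.2) = φ p) ∧
      (∀ p : ℝ × ℝ, φ (p.1 + a, p.2 + b) = φ p) ∧
      (∀ p : ℝ × ℝ,
        dX (fun q => (φ q).2) p - Complex.I * dY (fun q => (φ q).2) p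
          = ((2 * Real.pi / b : ℝ) : ℂ) * (φ p).1) ∧
      (∀ p : ℝ × ℝ,
        -(dX (fun q => (φ q).1) p + Complex.I * dY (fun q => (φ q).1) p)
          = ((2 * Real.pi / b : ℝ) : ℂ) * (φ p).2) := by
  set cb : ℂ := ((2 * Real.pi / b : ℝ) : ℂ) * Complex.I with hcb
  set e : ℝ → ℂ := fun y => Complex.exp (cb * y) with he
  have hde : ∀ y : ℝ, HasDerivAt e (cb * e y) y := fun y => DFT.hasDerivAt_cexp cb y
  have hecd : ContDiff ℝ (⊤ : ℕ∞) e := by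
    have h1 : ContDiff ℝ (⊤ : ℕ∞) (fun y : ℝ => cb * (y:ℂ)) :=
      contDiff_const.mul Complex.ofRealCLM.contDiff
    exact h1.cexp
  refine ⟨fun p => (e p.2, e p.2), ?_, ?_, ?_, ?_, ?_, ?_⟩
  · exact (hecd.comp contDiff_snd).prodMk (hecd.comp contDiff_snd)
  · intro h
    have h0 := congrFun h (0, 0)
    have h1 : e 0 = 0 := congrArg Prod.fst h0
    rw [he] at h1
    simp at h1
  · intro p
    rfl
  · intro p
    have hper : e (p.2 + b) = e p.2 := by
      rw [he]
      have hbc : cb * ((p.2 + b : ℝ):ℂ) = cb * (p.2:ℂ) + 2 * (Real.pi:ℂ) * Complex.I := by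
        rw [hcb]
        have hbne : (b:ℂ) ≠ 0 := Complex.ofReal_ne_zero.2 hb.ne'
        push_cast
        field_simp
      simp only [hbc, Complex.exp_add, Complex.exp_two_pi_mul_I, mul_one]
    show ((e (p.2 + b), e (p.2 + b)) : ℂ × ℂ) = (e p.2, e p.2)
    rw [hper]
  all_goals {
    have hk : ∀ p : ℝ × ℝ, HasFDerivAt (fun q : ℝ × ℝ => e q.2)
        ((ContinuousLinearMap.smulRight (1 : ℝ →L[ℝ] ℝ) (cb * e p.2)).comp
          (ContinuousLinearMap.snd ℝ ℝ ℝ)) p := fun p =>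
      ((hde p.2).hasFDerivAt).comp p (ContinuousLinearMap.snd ℝ ℝ ℝ).hasFDerivAt
    intro p
    have hdx : dX (fun q : ℝ × ℝ => e q.2) p = 0 := by
      rw [dX, (hk p).fderiv]
      simp
    have hdy : dY (fun q : ℝ × ℝ => e q.2) p = cb * e p.2 := by
      rw [dY, (hk p).fderiv]
      simp
    show _
    try { rw [show (fun q : ℝ × ℝ => ((fun p : ℝ × ℝ => ((e p.2, e p.2) : ℂ × ℂ)) q).2)
        = fun q : ℝ × ℝ => e q.2 from rfl] }
    try { rw [show (fun q : ℝ × ℝ => ((fun p : ℝ × ℝ => ((e p.2, e p.2) : ℂ × ℂ)) q).1)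
        = fun q : ℝ × ℝ => e q.2 from rfl] }
    rw [hdx, hdy, hcb]
    show _
    linear_combination (-(((2 * Real.pi / b : ℝ):ℂ) * e p.2)) * Complex.I_sq
  }

end DFT2


/-- The first positive Dirac eigenvalue of the flat torus `ℝ²/Γ`, `Γ = ℤ(1,0) + ℤ(a,b)`
(`|a| ≤ 1/2`, `a² + b² ≥ 1`), with the trivial spin structure is `2π/b`: there is a nonzero
Γ-periodic smooth eigenspinor with eigenvalue `2π/b`, and none with eigenvalue `λ` for any
`0 < λ < 2π/b`. -/
theorem dirac_first_eigenvalue_flat_torus_trivial_spin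
    (a b : ℝ) (ha : |a| ≤ 1 / 2) (hb : 0 < b) (hab : 1 ≤ a ^ 2 + b ^ 2) :
    (∃ φ : ℝ × ℝ → ℂ × ℂ, ContDiff ℝ (⊤ : ℕ∞) φ ∧ φ ≠ 0 ∧
      (∀ p : ℝ × ℝ, φ (p.1 + 1, p.2) = φ p) ∧
      (∀ p : ℝ × ℝ, φ (p.1 + a, p.2 + b) = φ p) ∧
      (∀ p : ℝ × ℝ,
        dX (fun q => (φ q).2) p - Complex.I * dY (fun q => (φ q).2) p
          = ((2 * Real.pi / b : ℝ) : ℂ) * (φ p).1) ∧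
      (∀ p : ℝ × ℝ,
        -(dX (fun q => (φ q).1) p + Complex.I * dY (fun q => (φ q).1) p)
          = ((2 * Real.pi / b : ℝ) : ℂ) * (φ p).2)) ∧
    (∀ lam : ℝ, 0 < lam → lam < 2 * Real.pi / b →
      ¬ ∃ φ : ℝ × ℝ → ℂ × ℂ, ContDiff ℝ (⊤ : ℕ∞) φ ∧ φ ≠ 0 ∧
        (∀ p : ℝ × ℝ, φ (p.1 + 1, p.2) = φ p) ∧
        (∀ p : ℝ × ℝ, φ (p.1 + a, p.2 + b) = φ p) ∧
        (∀ p : ℝ × ℝ,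
          dX (fun q => (φ q).2) p - Complex.I * dY (fun q => (φ q).2) p
            = (lam : ℂ) * (φ p).1) ∧
        (∀ p : ℝ × ℝ,
          -(dX (fun q => (φ q).1) p + Complex.I * dY (fun q => (φ q).1) p)
            = (lam : ℂ) * (φ p).2)) := by
  constructor
  · exact DFT2.existence a b hb
  · rintro lam hlam hlt ⟨φ, hφ, hne, hp1, hp2, he1, he2⟩
    exact hne (DFT2.key a b lam ha hb hab hlam hlt φ hφ hp1 hp2 he1 he2)
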